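/- Let 0 < a < b, 1 < σ ≤ 2, λ ∈ ℝ, and let G be the Green's function G(x,τ) = (1/Γ(σ))·[((ln(x/a)/ln(b/a))^{σ−1}·(ln(b/τ))^{σ−1} − (ln(x/τ))^{σ−1})/τ] for a ≤ τ ≤ x ≤ b, and G(x,τ) = (1/Γ(σ))·(ln(x/a)/ln(b/a))^{σ−1}·(ln(b/τ))^{σ−1}/τ for a ≤ x ≤ τ ≤ b. If u : [a,b] → ℝ is continuous, not identically zero, and satisfies u(x) = λ·∫_a^b G(x,τ)·u(τ) dτ for all x ∈ [a,b], then |λ| ≥ σ^{σ+1}·Γ(σ)/((σ−1)^{σ−1}·(ln(b/a))^{σ}). -/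

import Mathlib

/-
Take x₀ where |u| is maximal. The Green's function is nonnegative, because ln(x/τ) ≤ s·ln(b/τ) for
a ≤ τ ≤ x ≤ b with s = ln(x/a)/ln(b/a); so the integral equation at x₀ gives
1 ≤ |λ| ∫ₐᵇ G(x₀, τ) dτ. Since -(ln(x/τ))^σ/σ is a primitive of (ln(x/τ))^(σ-1)/τ, that integral is
(ln(b/a))^σ · s^(σ-1)(1 - s) / (σ Γ(σ)) at s = ln(x₀/a)/ln(b/a) ∈ [0, 1], and weighted AM–GM bounds
s^(σ-1)(1 - s) by its value (σ-1)^(σ-1)/σ^σ at s = (σ-1)/σ.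
-/

open Real Set MeasureTheory intervalIntegral

noncomputable def hadamardKernel (σ x τ : ℝ) : ℝ := log (x / τ) ^ (σ - 1) / τ

section HadamardKernel

variable {σ x : ℝ}

theorem hasDerivAt_hadamardKernel_primitive (hx : x ≠ 0) (hσ : 1 ≤ σ) {τ : ℝ} (hτ : 0 < τ) :
    HasDerivAt (fun t => -(log (x / t) ^ σ / σ)) (hadamardKernel σ x τ) τ := by
  have hlog : HasDerivAt (fun t => log (x / t)) (-τ⁻¹) τ := by
    refine (((hasDerivAt_inv hτ.ne').const_mul x).log (by positivity)).congr_deriv ?_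
    field_simp
  have hσ0 : σ ≠ 0 := by positivity
  have := ((hlog.rpow_const (p := σ) (Or.inr hσ)).div_const σ).neg
  refine this.congr_deriv ?_
  rw [hadamardKernel]
  field_simp

theorem continuousOn_hadamardKernel (hx : x ≠ 0) (hσ : 1 ≤ σ) :
    ContinuousOn (hadamardKernel σ x) (Ioi 0) :=
  (((continuousOn_const.div continuousOn_id fun _ hτ => ne_of_gt hτ).log
    fun _ hτ => div_ne_zero hx (ne_of_gt hτ)).rpow_const fun _ _ => Or.inr (by linarith)).div
    continuousOn_id fun _ hτ => ne_of_gt hτ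

theorem intervalIntegrable_hadamardKernel (hx : x ≠ 0) (hσ : 1 ≤ σ) {c d : ℝ} (hc : 0 < c)
    (hd : 0 < d) : IntervalIntegrable (hadamardKernel σ x) volume c d :=
  ((continuousOn_hadamardKernel hx hσ).mono fun _ hτ => lt_of_lt_of_le (lt_min hc hd) hτ.1)
    |>.intervalIntegrable

theorem integral_hadamardKernel (hx : x ≠ 0) (hσ : 1 ≤ σ) {c d : ℝ} (hc : 0 < c) (hcd : c ≤ d) :
    ∫ τ in c..d, hadamardKernel σ x τ = (log (x / c) ^ σ - log (x / d) ^ σ) / σ := by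
  have hpos : ∀ τ ∈ uIcc c d, 0 < τ := fun τ hτ => hc.trans_le (uIcc_of_le hcd ▸ hτ).1
  rw [integral_eq_sub_of_hasDerivAt
    (fun τ hτ => hasDerivAt_hadamardKernel_primitive hx hσ (hpos τ hτ))
    (intervalIntegrable_hadamardKernel hx hσ hc (hc.trans_le hcd))]
  ring

end HadamardKernel

theorem rpow_sub_one_mul_one_sub_le {σ s : ℝ} (hσ : 1 < σ) (hs0 : 0 ≤ s) (hs1 : s ≤ 1) :
    s ^ (σ - 1) * (1 - s) ≤ (σ - 1) ^ (σ - 1) / σ ^ σ := by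
  have hσ0 : 0 < σ := by linarith
  have hσ1 : 0 < σ - 1 := by linarith
  have h1s : 0 ≤ 1 - s := by linarith
  have hamgm : (σ * s / (σ - 1)) ^ ((σ - 1) / σ) * (σ * (1 - s)) ^ (1 / σ) ≤ 1 := by
    refine (geom_mean_le_arith_mean2_weighted (by positivity) (by positivity) (by positivity)
      (by positivity) (by field_simp; ring)).trans_eq ?_
    field_simp
    ring
  have hpow := rpow_le_rpow (by positivity) hamgm hσ0.le
  rw [one_rpow, mul_rpow (by positivity) (by positivity), ← rpow_mul (by positivity),
    ← rpow_mul (by positivity), div_mul_cancel₀ _ hσ0.ne', one_div_mul_cancel hσ0.ne', rpow_one,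
    div_rpow (by positivity) hσ1.le, mul_rpow hσ0.le hs0] at hpow
  have hσσ : σ ^ σ = σ ^ (σ - 1) * σ := by
    rw [← rpow_add_one hσ0.ne']; ring_nf
  rw [le_div_iff₀ (by positivity), hσσ]
  rw [div_mul_eq_mul_div, div_le_one (by positivity)] at hpow
  linarith

theorem log_div_le_mul_log_div {a b x τ : ℝ} (ha : 0 < a) (hab : a < b) (haτ : a ≤ τ)
    (hτx : τ ≤ x) (hxb : x ≤ b) :
    log (x / τ) ≤ log (x / a) / log (b / a) * log (b / τ) := by
  have hτ : 0 < τ := ha.trans_le haτ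
  have hx : 0 < x := hτ.trans_le hτx
  have hL : 0 < log b - log a := sub_pos.2 (log_lt_log ha hab)
  rw [log_div hx.ne' hτ.ne', log_div hx.ne' ha.ne', log_div (hx.trans_le hxb).ne' ha.ne',
    log_div (hx.trans_le hxb).ne' hτ.ne', div_mul_eq_mul_div, le_div_iff₀ hL]
  nlinarith [log_le_log ha haτ, log_le_log hx hxb]

theorem log_div_div_log_div_mem_Icc {a b x : ℝ} (ha : 0 < a) (hab : a < b) (hx : x ∈ Icc a b) :
    log (x / a) / log (b / a) ∈ Icc 0 1 := by
  have hL : 0 < log (b / a) := log_pos ((one_lt_div ha).2 hab)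
  exact ⟨div_nonneg (log_nonneg ((one_le_div ha).2 hx.1)) hL.le,
    (div_le_one hL).2 (log_le_log (div_pos (ha.trans_le hx.1) ha) (by gcongr; exact hx.2))⟩

theorem hadamardKernel_self {σ x : ℝ} (hσ : σ ≠ 1) (hx : x ≠ 0) : hadamardKernel σ x x = 0 := by
  rw [hadamardKernel, div_self hx, log_one, zero_rpow (sub_ne_zero.2 hσ), zero_div]

noncomputable def hadamardGreen (a b σ x τ : ℝ) : ℝ :=
  if τ ≤ x then
    (1 / Gamma σ) *
      (((log (x / a) / log (b / a)) ^ (σ - 1) * log (b / τ) ^ (σ - 1) - log (x / τ) ^ (σ - 1)) / τ)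
  else
    (1 / Gamma σ) * ((log (x / a) / log (b / a)) ^ (σ - 1) * log (b / τ) ^ (σ - 1) / τ)

section HadamardGreen

variable {a b σ x τ : ℝ}

theorem hadamardGreen_of_le (hτx : τ ≤ x) :
    hadamardGreen a b σ x τ = (Gamma σ)⁻¹ * ((log (x / a) / log (b / a)) ^ (σ - 1) *
      hadamardKernel σ b τ - hadamardKernel σ x τ) := by
  rw [hadamardGreen, if_pos hτx, hadamardKernel, hadamardKernel]
  ring

theorem hadamardGreen_of_ge (hσ : σ ≠ 1) (hx : x ≠ 0) (hxτ : x ≤ τ) :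
    hadamardGreen a b σ x τ = (Gamma σ)⁻¹ * ((log (x / a) / log (b / a)) ^ (σ - 1) *
      hadamardKernel σ b τ) := by
  rcases hxτ.eq_or_lt with rfl | hxτ
  · rw [hadamardGreen_of_le le_rfl, hadamardKernel_self hσ hx, sub_zero]
  · rw [hadamardGreen, if_neg hxτ.not_ge, hadamardKernel]
    ring

theorem hadamardGreen_nonneg (ha : 0 < a) (hab : a < b) (hσ : 1 < σ) (hx : x ∈ Icc a b)
    (hτ : τ ∈ Icc a b) : 0 ≤ hadamardGreen a b σ x τ := by
  have hτ0 : 0 < τ := ha.trans_le hτ.1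
  have hs := (log_div_div_log_div_mem_Icc ha hab hx).1
  have hbτ : 0 ≤ log (b / τ) := log_nonneg ((one_le_div hτ0).2 hτ.2)
  have hΓ : 0 < (Gamma σ)⁻¹ := inv_pos.2 (Gamma_pos_of_pos (by linarith))
  rcases le_total τ x with hτx | hxτ
  · rw [hadamardGreen_of_le hτx, hadamardKernel, hadamardKernel, ← mul_div_assoc, ← sub_div,
      ← mul_rpow hs hbτ]
    have hmono : log (x / τ) ^ (σ - 1) ≤ (log (x / a) / log (b / a) * log (b / τ)) ^ (σ - 1) :=
      rpow_le_rpow (log_nonneg ((one_le_div hτ0).2 hτx))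
        (log_div_le_mul_log_div ha hab hτ.1 hτx hx.2) (by linarith)
    have := sub_nonneg.2 hmono
    positivity
  · rw [hadamardGreen_of_ge hσ.ne' (ha.trans_le hx.1).ne' hxτ, hadamardKernel]
    positivity

theorem intervalIntegrable_hadamardGreen_left (ha : 0 < a) (hab : a < b) (hσ : 1 ≤ σ)
    (hx : x ∈ Icc a b) : IntervalIntegrable (hadamardGreen a b σ x) volume a x := by
  have hx0 : 0 < x := ha.trans_le hx.1
  refine (((intervalIntegrable_hadamardKernel (ha.trans hab).ne' hσ ha hx0).const_mul
    ((log (x / a) / log (b / a)) ^ (σ - 1))).sub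
    (intervalIntegrable_hadamardKernel hx0.ne' hσ ha hx0) |>.const_mul (Gamma σ)⁻¹).congr ?_
  intro τ hτ
  rw [uIoc_of_le hx.1] at hτ
  exact (hadamardGreen_of_le hτ.2).symm

theorem intervalIntegrable_hadamardGreen_right (ha : 0 < a) (hab : a < b) (hσ : 1 < σ)
    (hx : x ∈ Icc a b) : IntervalIntegrable (hadamardGreen a b σ x) volume x b := by
  have hx0 : 0 < x := ha.trans_le hx.1
  refine ((intervalIntegrable_hadamardKernel (ha.trans hab).ne' hσ.le hx0 (ha.trans hab)).const_mul
    ((log (x / a) / log (b / a)) ^ (σ - 1)) |>.const_mul (Gamma σ)⁻¹).congr ?_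
  intro τ hτ
  rw [uIoc_of_le hx.2] at hτ
  exact (hadamardGreen_of_ge hσ.ne' hx0.ne' hτ.1.le).symm

theorem intervalIntegrable_hadamardGreen (ha : 0 < a) (hab : a < b) (hσ : 1 < σ)
    (hx : x ∈ Icc a b) : IntervalIntegrable (hadamardGreen a b σ x) volume a b :=
  (intervalIntegrable_hadamardGreen_left ha hab hσ.le hx).trans
    (intervalIntegrable_hadamardGreen_right ha hab hσ hx)

theorem integral_hadamardGreen (ha : 0 < a) (hab : a < b) (hσ : 1 < σ) (hx : x ∈ Icc a b) :
    ∫ τ in a..b, hadamardGreen a b σ x τ = log (b / a) ^ σ / (σ * Gamma σ) *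
      ((log (x / a) / log (b / a)) ^ (σ - 1) * (1 - log (x / a) / log (b / a))) := by
  have hb : 0 < b := ha.trans hab
  have hx0 : 0 < x := ha.trans_le hx.1
  set S := (log (x / a) / log (b / a)) ^ (σ - 1)
  have hleft : ∫ τ in a..x, hadamardGreen a b σ x τ =
      (Gamma σ)⁻¹ * (S * ∫ τ in a..x, hadamardKernel σ b τ) -
        (Gamma σ)⁻¹ * ∫ τ in a..x, hadamardKernel σ x τ := by
    rw [intervalIntegral.integral_congr
        (g := fun τ => (Gamma σ)⁻¹ * (S * hadamardKernel σ b τ - hadamardKernel σ x τ))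
        fun τ hτ => hadamardGreen_of_le (uIcc_of_le hx.1 ▸ hτ).2,
      intervalIntegral.integral_const_mul, intervalIntegral.integral_sub
        ((intervalIntegrable_hadamardKernel hb.ne' hσ.le ha hx0).const_mul S)
        (intervalIntegrable_hadamardKernel hx0.ne' hσ.le ha hx0),
      intervalIntegral.integral_const_mul]
    ring
  have hright : ∫ τ in x..b, hadamardGreen a b σ x τ =
      (Gamma σ)⁻¹ * (S * ∫ τ in x..b, hadamardKernel σ b τ) := by
    rw [intervalIntegral.integral_congr (g := fun τ => (Gamma σ)⁻¹ * (S * hadamardKernel σ b τ))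
        fun τ hτ => hadamardGreen_of_ge hσ.ne' hx0.ne' (uIcc_of_le hx.2 ▸ hτ).1,
      intervalIntegral.integral_const_mul, intervalIntegral.integral_const_mul]
  rw [← integral_add_adjacent_intervals (intervalIntegrable_hadamardGreen_left ha hab hσ.le hx)
    (intervalIntegrable_hadamardGreen_right ha hab hσ hx), hleft, hright,
    integral_hadamardKernel hb.ne' hσ.le ha hx.1, integral_hadamardKernel hx0.ne' hσ.le ha hx.1,
    integral_hadamardKernel hb.ne' hσ.le hx0 hx.2, div_self hx0.ne', div_self hb.ne', log_one,
    zero_rpow (by positivity)]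
  have hL : log (b / a) ≠ 0 := (log_pos ((one_lt_div ha).2 hab)).ne'
  have hs := (log_div_div_log_div_mem_Icc ha hab hx).1
  have hxa : log (x / a) ^ σ = S * (log (x / a) / log (b / a)) * log (b / a) ^ σ := by
    rw [← rpow_one (log (x / a) / log (b / a)), ← rpow_add' hs (by positivity), sub_add_cancel,
      ← mul_rpow hs (log_nonneg ((one_le_div ha).2 hab.le)), div_mul_cancel₀ _ hL]
  rw [hxa]
  field_simp
  ring

theorem integral_hadamardGreen_le (ha : 0 < a) (hab : a < b) (hσ : 1 < σ) (hx : x ∈ Icc a b) :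
    ∫ τ in a..b, hadamardGreen a b σ x τ ≤
      (σ - 1) ^ (σ - 1) * log (b / a) ^ σ / (σ ^ (σ + 1) * Gamma σ) := by
  have hσ0 : 0 < σ := by linarith
  have hΓ : 0 < Gamma σ := Gamma_pos_of_pos hσ0
  have hL : 0 < log (b / a) := log_pos ((one_lt_div ha).2 hab)
  obtain ⟨hs0, hs1⟩ := log_div_div_log_div_mem_Icc ha hab hx
  calc ∫ τ in a..b, hadamardGreen a b σ x τ
      ≤ log (b / a) ^ σ / (σ * Gamma σ) * ((σ - 1) ^ (σ - 1) / σ ^ σ) := by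
        rw [integral_hadamardGreen ha hab hσ hx]
        gcongr
        exact rpow_sub_one_mul_one_sub_le hσ hs0 hs1
    _ = (σ - 1) ^ (σ - 1) * log (b / a) ^ σ / (σ ^ (σ + 1) * Gamma σ) := by
        rw [rpow_add_one hσ0.ne']
        field_simp

end HadamardGreen

theorem exists_one_le_abs_mul_integral_of_eigenfunction {a b lam : ℝ} {K : ℝ → ℝ → ℝ}
    {u : ℝ → ℝ} (hu : ContinuousOn u (Icc a b)) (hne : ∃ x ∈ Icc a b, u x ≠ 0)
    (hK : ∀ x ∈ Icc a b, IntervalIntegrable (K x) volume a b)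
    (hK0 : ∀ x ∈ Icc a b, ∀ τ ∈ Icc a b, 0 ≤ K x τ)
    (heq : ∀ x ∈ Icc a b, u x = lam * ∫ τ in a..b, K x τ * u τ) :
    ∃ x ∈ Icc a b, 1 ≤ |lam| * ∫ τ in a..b, K x τ := by
  obtain ⟨z, hz, hz0⟩ := hne
  have hab : a ≤ b := hz.1.trans hz.2
  obtain ⟨x, hx, hmax⟩ := isCompact_Icc.exists_isMaxOn ⟨z, hz⟩ hu.abs
  have hM : 0 < |u x| := (abs_pos.2 hz0).trans_le (hmax hz)
  have hbound : |∫ τ in a..b, K x τ * u τ| ≤ (∫ τ in a..b, K x τ) * |u x| := by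
    rw [← intervalIntegral.integral_mul_const]
    refine (intervalIntegral.abs_integral_le_integral_abs hab).trans <|
      intervalIntegral.integral_mono_on hab ((hK x hx).mul_continuousOn ?_).abs
        ((hK x hx).mul_const _) fun τ hτ => ?_
    · rwa [uIcc_of_le hab]
    · rw [abs_mul, abs_of_nonneg (hK0 x hx τ hτ)]
      exact mul_le_mul_of_nonneg_left (hmax hτ) (hK0 x hx τ hτ)
  refine ⟨x, hx, le_of_mul_le_mul_right ?_ hM⟩
  calc 1 * |u x| = |lam| * |∫ τ in a..b, K x τ * u τ| := by rw [one_mul, heq x hx, abs_mul]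
    _ ≤ |lam| * ((∫ τ in a..b, K x τ) * |u x|) := by gcongr
    _ = (|lam| * ∫ τ in a..b, K x τ) * |u x| := by ring

theorem stmt_9_general (a b σ lam : ℝ) (ha : 0 < a) (hab : a < b) (hσ1 : 1 < σ)
    (G : ℝ → ℝ → ℝ)
    (hG : ∀ x τ, G x τ =
      if τ ≤ x then
        (1 / Real.Gamma σ) *
          (((Real.log (x / a) / Real.log (b / a)) ^ (σ - 1) * (Real.log (b / τ)) ^ (σ - 1)
            - (Real.log (x / τ)) ^ (σ - 1)) / τ)
      else
        (1 / Real.Gamma σ) *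
          ((Real.log (x / a) / Real.log (b / a)) ^ (σ - 1) * (Real.log (b / τ)) ^ (σ - 1) / τ))
    (u : ℝ → ℝ) (hu : ContinuousOn u (Icc a b))
    (hne : ∃ x ∈ Icc a b, u x ≠ 0)
    (heq : ∀ x ∈ Icc a b, u x = lam * ∫ τ in a..b, G x τ * u τ) :
    |lam| ≥ σ ^ (σ + 1) * Real.Gamma σ / ((σ - 1) ^ (σ - 1) * (Real.log (b / a)) ^ σ) := by
  obtain rfl : G = hadamardGreen a b σ := funext₂ hG
  obtain ⟨x, hx, hlam⟩ := exists_one_le_abs_mul_integral_of_eigenfunction hu hne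
    (fun x hx => intervalIntegrable_hadamardGreen ha hab hσ1 hx)
    (fun x hx τ hτ => hadamardGreen_nonneg ha hab hσ1 hx hτ) heq
  have hΓ : 0 < Gamma σ := Gamma_pos_of_pos (by linarith)
  have hL : 0 < log (b / a) := log_pos ((one_lt_div ha).2 hab)
  have hC : 0 < (σ - 1) ^ (σ - 1) * log (b / a) ^ σ := by
    have : 0 < σ - 1 := by linarith
    positivity
  rw [ge_iff_le, div_le_iff₀ hC]
  calc σ ^ (σ + 1) * Gamma σ
      ≤ σ ^ (σ + 1) * Gamma σ * (|lam| * ∫ τ in a..b, hadamardGreen a b σ x τ) :=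
        le_mul_of_one_le_right (by positivity) hlam
    _ ≤ σ ^ (σ + 1) * Gamma σ * (|lam| *
          ((σ - 1) ^ (σ - 1) * log (b / a) ^ σ / (σ ^ (σ + 1) * Gamma σ))) := by
        gcongr
        exact integral_hadamardGreen_le ha hab hσ1 hx
    _ = |lam| * ((σ - 1) ^ (σ - 1) * log (b / a) ^ σ) := by
        field_simp

theorem stmt_9 (a b σ lam : ℝ) (ha : 0 < a) (hab : a < b) (hσ1 : 1 < σ) (hσ2 : σ ≤ 2)
    (G : ℝ → ℝ → ℝ)
    (hG : ∀ x τ, G x τ =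
      if τ ≤ x then
        (1 / Real.Gamma σ) *
          (((Real.log (x / a) / Real.log (b / a)) ^ (σ - 1) * (Real.log (b / τ)) ^ (σ - 1)
            - (Real.log (x / τ)) ^ (σ - 1)) / τ)
      else
        (1 / Real.Gamma σ) *
          ((Real.log (x / a) / Real.log (b / a)) ^ (σ - 1) * (Real.log (b / τ)) ^ (σ - 1) / τ))
    (u : ℝ → ℝ) (hu : ContinuousOn u (Icc a b))
    (hne : ∃ x ∈ Icc a b, u x ≠ 0)
    (heq : ∀ x ∈ Icc a b, u x = lam * ∫ τ in a..b, G x τ * u τ) :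
    |lam| ≥ σ ^ (σ + 1) * Real.Gamma σ / ((σ - 1) ^ (σ - 1) * (Real.log (b / a)) ^ σ) :=
  stmt_9_general a b σ lam ha hab hσ1 G hG u hu hne heq
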